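/- arXiv:1807.10008 — 9 statements merged into one kernel-verified Lean document; each statement's English description precedes it below -/
import Mathlib

section
/- Let (V,𝓑) be a (t+1)-(v,k,λ) adesign with (k-t)/(v-t) > 1/2. Then as Y ranges over t-subsets of V, the number r_Y of blocks containing Y takes at most two values, namely ⌈λ(v-t)/(k-t)⌉ and ⌈λ(v-t)/(k-t)⌉ + 1. -/
/-- If `(V,𝓑)` is a `(t+1)-(v,k,λ)` adesign with `(k-t)/(v-t) > 1/2`,
then for every `t`-subset `Y`, the number of blocks containing `Y` is
`⌈λ(v-t)/(k-t)⌉` or `⌈λ(v-t)/(k-t)⌉ + 1`. -/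
theorem stmt_4 {α : Type*} [Fintype α] [DecidableEq α]
    (v k t lam : ℕ) (𝓑 : Finset (Finset α))
    (hv : Fintype.card α = v)
    (hk : ∀ B ∈ 𝓑, B.card = k) (htk : t + 1 ≤ k)
    (hhalf : v - t < 2 * (k - t))
    (hade : ∀ Z : Finset α, Z.card = t + 1 →
      (𝓑.filter fun B => Z ⊆ B).card = lam ∨ (𝓑.filter fun B => Z ⊆ B).card = lam + 1)
    (hnotdesign : (∃ Z : Finset α, Z.card = t + 1 ∧ (𝓑.filter fun B => Z ⊆ B).card = lam) ∧
      (∃ Z : Finset α, Z.card = t + 1 ∧ (𝓑.filter fun B => Z ⊆ B).card = lam + 1)) :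
    ∀ Y : Finset α, Y.card = t →
      (𝓑.filter fun B => Y ⊆ B).card = ⌈((lam * (v - t) : ℕ) : ℚ) / ((k - t : ℕ) : ℚ)⌉₊ ∨
      (𝓑.filter fun B => Y ⊆ B).card = ⌈((lam * (v - t) : ℕ) : ℚ) / ((k - t : ℕ) : ℚ)⌉₊ + 1 := by
  intro Y hY
  obtain ⟨⟨Z, hZcard, _⟩, -⟩ := hnotdesign
  have hvt : t + 1 ≤ v := by
    rw [← hv, ← Finset.card_univ]
    exact hZcard ▸ Finset.card_le_card (Finset.subset_univ Z)
  set r := (𝓑.filter fun B => Y ⊆ B).card with hr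
  have hcardU : (Finset.univ \ Y).card = v - t := by
    rw [Finset.card_sdiff_of_subset (Finset.subset_univ Y), Finset.card_univ, hv, hY]
  -- double counting identity
  have key : ∑ x ∈ Finset.univ \ Y, (𝓑.filter fun B => insert x Y ⊆ B).card
      = (k - t) * r := by
    have h1 : ∀ x, (𝓑.filter fun B => insert x Y ⊆ B).card
        = ∑ B ∈ 𝓑, if insert x Y ⊆ B then 1 else 0 := by
      intro x; rw [Finset.card_filter]
    simp_rw [h1]
    rw [Finset.sum_comm]
    have h2 : ∀ B ∈ 𝓑, (∑ x ∈ Finset.univ \ Y, if insert x Y ⊆ B then 1 else 0)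
        = if Y ⊆ B then k - t else 0 := by
      intro B hB
      by_cases hYB : Y ⊆ B
      · rw [if_pos hYB, ← Finset.card_filter]
        have : (Finset.univ \ Y).filter (fun x => insert x Y ⊆ B) = B \ Y := by
          ext x
          simp [Finset.insert_subset_iff, hYB, and_comm]
        rw [this, Finset.card_sdiff_of_subset hYB, hk B hB, hY]
      · rw [if_neg hYB]
        apply Finset.sum_eq_zero
        intro x _
        rw [if_neg]
        exact fun h => hYB ((Finset.subset_insert x Y).trans h)
    rw [Finset.sum_congr rfl h2, hr, Finset.card_filter, Finset.mul_sum]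
    refine Finset.sum_congr rfl fun B _ => ?_
    split <;> simp
  have hlow : ∀ x ∈ Finset.univ \ Y, lam ≤ (𝓑.filter fun B => insert x Y ⊆ B).card := by
    intro x hx
    have hxY : x ∉ Y := (Finset.mem_sdiff.mp hx).2
    rcases hade (insert x Y) (by rw [Finset.card_insert_of_notMem hxY, hY]) with h | h <;> omega
  have hhigh : ∀ x ∈ Finset.univ \ Y, (𝓑.filter fun B => insert x Y ⊆ B).card ≤ lam + 1 := by
    intro x hx
    have hxY : x ∉ Y := (Finset.mem_sdiff.mp hx).2
    rcases hade (insert x Y) (by rw [Finset.card_insert_of_notMem hxY, hY]) with h | h <;> omega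
  have hL : lam * (v - t) ≤ (k - t) * r := by
    calc lam * (v - t) = ∑ _x ∈ Finset.univ \ Y, lam := by rw [Finset.sum_const, hcardU]; ring
    _ ≤ _ := Finset.sum_le_sum hlow
    _ = (k - t) * r := key
  have hU : (k - t) * r ≤ (lam + 1) * (v - t) := by
    calc (k - t) * r = _ := key.symm
    _ ≤ ∑ _x ∈ Finset.univ \ Y, (lam + 1) := Finset.sum_le_sum hhigh
    _ = (lam + 1) * (v - t) := by rw [Finset.sum_const, hcardU]; ring
  have hktpos : (0 : ℚ) < ((k - t : ℕ) : ℚ) := by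
    have : 1 ≤ k - t := by omega
    exact_mod_cast this
  set q : ℚ := ((lam * (v - t) : ℕ) : ℚ) / ((k - t : ℕ) : ℚ) with hq
  have hceil_le : ⌈q⌉₊ ≤ r := by
    rw [Nat.ceil_le, hq, div_le_iff₀ hktpos]
    exact_mod_cast (mul_comm (k - t) r) ▸ hL
  have hr_lt : (r : ℚ) < q + 2 := by
    have h1 : (r : ℚ) * ((k - t : ℕ) : ℚ) ≤ ((lam + 1) * (v - t) : ℕ) := by
      exact_mod_cast (mul_comm (k - t) r) ▸ hU
    have h2 : (((lam + 1) * (v - t) : ℕ) : ℚ) < ((lam * (v - t) : ℕ) : ℚ) + 2 * ((k - t : ℕ) : ℚ) := by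
      have h : (lam + 1) * (v - t) < lam * (v - t) + 2 * (k - t) := by nlinarith [hhalf]
      exact_mod_cast h
    rw [hq, div_add' _ _ _ hktpos.ne', lt_div_iff₀ hktpos]
    linarith [h1, h2]
  have hub : r ≤ ⌈q⌉₊ + 1 := by
    by_contra h
    push_neg at h
    have h2 : (⌈q⌉₊ : ℚ) + 2 ≤ (r : ℚ) := by exact_mod_cast h
    have h3 : q ≤ (⌈q⌉₊ : ℚ) := Nat.le_ceil q
    linarith
  omega
end

section
/- Let (V,𝓑) be a (t+1)-(v,k,λ) adesign with b blocks which is also a t-(v,k,λ') design. Then λ·C(v,t+1)/C(k,t+1) < b < (λ+1)·C(v,t+1)/C(k,t+1), where C(n,r) denotes the binomial coefficient. -/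
/-- If `(V,𝓑)` is a `(t+1)-(v,k,λ)` adesign with `b` blocks which is also a
`t-(v,k,λ')` design, then `λ·C(v,t+1)/C(k,t+1) < b < (λ+1)·C(v,t+1)/C(k,t+1)`. -/
theorem stmt_5 {α : Type*} [Fintype α] [DecidableEq α]
    (v k t lam lam' : ℕ) (𝓑 : Finset (Finset α))
    (hv : Fintype.card α = v)
    (hk : ∀ B ∈ 𝓑, B.card = k) (htk : t + 1 ≤ k)
    (hade : ∀ Z : Finset α, Z.card = t + 1 →
      (𝓑.filter fun B => Z ⊆ B).card = lam ∨ (𝓑.filter fun B => Z ⊆ B).card = lam + 1)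
    (hnotdesign : (∃ Z : Finset α, Z.card = t + 1 ∧ (𝓑.filter fun B => Z ⊆ B).card = lam) ∧
      (∃ Z : Finset α, Z.card = t + 1 ∧ (𝓑.filter fun B => Z ⊆ B).card = lam + 1))
    (hdesign : ∀ Y : Finset α, Y.card = t → (𝓑.filter fun B => Y ⊆ B).card = lam') :
    (lam : ℚ) * (v.choose (t + 1)) / (k.choose (t + 1)) < (𝓑.card : ℚ) ∧
    (𝓑.card : ℚ) < ((lam : ℚ) + 1) * (v.choose (t + 1)) / (k.choose (t + 1)) := by
  classical
  set S := Finset.powersetCard (t + 1) (Finset.univ : Finset α) with hS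
  have hScard : S.card = v.choose (t + 1) := by
    rw [hS, Finset.card_powersetCard, Finset.card_univ, hv]
  -- double counting
  have hsum : ∑ Z ∈ S, (𝓑.filter fun B => Z ⊆ B).card = 𝓑.card * k.choose (t + 1) := by
    have h1 : ∀ Z ∈ S, (𝓑.filter fun B => Z ⊆ B).card
        = ∑ B ∈ 𝓑, if Z ⊆ B then 1 else 0 := by
      intro Z _; rw [Finset.card_filter]
    rw [Finset.sum_congr rfl h1, Finset.sum_comm]
    have h2 : ∀ B ∈ 𝓑, (∑ Z ∈ S, if Z ⊆ B then 1 else 0) = k.choose (t + 1) := by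
      intro B hB
      rw [← Finset.card_filter]
      have : S.filter (fun Z => Z ⊆ B) = Finset.powersetCard (t + 1) B := by
        ext Z
        simp [hS, Finset.mem_powersetCard, and_comm]
      rw [this, Finset.card_powersetCard, hk B hB]
    rw [Finset.sum_congr rfl h2, Finset.sum_const, smul_eq_mul]
  obtain ⟨⟨Z₀, hZ₀c, hZ₀⟩, ⟨Z₁, hZ₁c, hZ₁⟩⟩ := hnotdesign
  have hZ₀S : Z₀ ∈ S := by simp [hS, Finset.mem_powersetCard, hZ₀c]
  have hZ₁S : Z₁ ∈ S := by simp [hS, Finset.mem_powersetCard, hZ₁c]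
  -- strict lower bound
  have hlow : lam * v.choose (t + 1) < 𝓑.card * k.choose (t + 1) := by
    rw [← hsum, ← hScard, mul_comm]
    have : S.card * lam = ∑ _Z ∈ S, lam := by rw [Finset.sum_const, smul_eq_mul]
    rw [this]
    apply Finset.sum_lt_sum
    · intro Z hZ
      simp only [hS, Finset.mem_powersetCard] at hZ
      rcases hade Z hZ.2 with h | h <;> omega
    · refine ⟨Z₁, hZ₁S, ?_⟩
      omega
  have hhigh : 𝓑.card * k.choose (t + 1) < (lam + 1) * v.choose (t + 1) := by
    rw [← hsum, ← hScard, mul_comm (lam + 1)]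
    have : S.card * (lam + 1) = ∑ _Z ∈ S, (lam + 1) := by rw [Finset.sum_const, smul_eq_mul]
    rw [this]
    apply Finset.sum_lt_sum
    · intro Z hZ
      simp only [hS, Finset.mem_powersetCard] at hZ
      rcases hade Z hZ.2 with h | h <;> omega
    · refine ⟨Z₀, hZ₀S, ?_⟩
      omega
  have hkpos : (0 : ℚ) < (k.choose (t + 1) : ℚ) := by
    exact_mod_cast Nat.choose_pos htk
  constructor
  · rw [div_lt_iff₀ hkpos]
    exact_mod_cast hlow
  · rw [lt_div_iff₀ hkpos]
    push_cast
    exact_mod_cast hhigh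
end

section
/- Let A be the adjacency matrix of a tournament Γ on n vertices, and set S = 2A + I - J. Then Γ is doubly regular (every vertex has in-degree and out-degree (n-1)/2, and each pair of distinct vertices has exactly (n-3)/4 common out-neighbors and (n-3)/4 common in-neighbors) if and only if S·Sᵀ = nI - J. -/
/-!
For a tournament, `S = 2A + I - J` equals `A - Aᵀ`, so it is skew-symmetric and `S Sᵀ = Sᵀ S`;
since `Aᵀ` is again a tournament with `S(Aᵀ) = Sᵀ`, it suffices to show that `S Sᵀ = nI - J`
is equivalent to the out-neighbour conditions alone. The diagonal entries of `S Sᵀ` are always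
`n - 1`, and off the diagonal `(S Sᵀ)_{xy} = 4 |N⁺x ∩ N⁺y| - 2 (d⁺x + d⁺y) + n`. Conversely,
`S Sᵀ = nI - J` gives `‖Sᵀ 1‖² = 1ᵀ (nI - J) 1 = 0`, so the column sums of `S` vanish, and by
skew-symmetry so do its row sums `2 d⁺x + 1 - n`.
-/

open Finset

namespace Matrix

theorem vecMul_eq_zero_of_vecMul_mul_transpose_eq_zero {m n R : Type*} [Fintype m] [Fintype n]
    [CommRing R] [LinearOrder R] [IsStrictOrderedRing R] {M : Matrix m n R} {w : m → R}
    (h : w ᵥ* (M * Mᵀ) = 0) : w ᵥ* M = 0 := by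
  rw [← dotProduct_self_eq_zero]
  calc (w ᵥ* M) ⬝ᵥ (w ᵥ* M) = w ⬝ᵥ M *ᵥ (Mᵀ *ᵥ w) := by rw [dotProduct_mulVec, mulVec_transpose]
    _ = (w ᵥ* (M * Mᵀ)) ⬝ᵥ w := by rw [mulVec_mulVec, dotProduct_mulVec]
    _ = 0 := by rw [h, zero_dotProduct]

variable {V R : Type*} [DecidableEq V] [CommRing R]

-- A zero diagonal follows from `add_transpose` only when `2` is not a zero divisor in `R`.
structure IsTournament (A : Matrix V V R) : Prop where
  zero_or_one : ∀ x y, A x y = 0 ∨ A x y = 1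
  add_transpose : A + Aᵀ = of (fun _ _ => 1) - 1

def seidel (A : Matrix V V R) : Matrix V V R := (2 : R) • A + 1 - of fun _ _ => 1

theorem apply_add_apply_eq_one {A : Matrix V V R} (h : A + Aᵀ = of (fun _ _ => 1) - 1)
    {x y : V} (hxy : x ≠ y) : A x y + A y x = 1 := by
  simpa [hxy] using congrFun₂ h x y

theorem seidel_eq_sub_transpose {A : Matrix V V R} (h : A + Aᵀ = of (fun _ _ => 1) - 1) :
    seidel A = A - Aᵀ := by
  rw [seidel, add_sub_assoc, ← neg_sub, ← h, two_smul]
  abel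

theorem transpose_seidel {A : Matrix V V R} (h : A + Aᵀ = of (fun _ _ => 1) - 1) :
    (seidel A)ᵀ = -seidel A := by
  rw [seidel_eq_sub_transpose h, transpose_sub, transpose_transpose, neg_sub]

theorem seidel_transpose (A : Matrix V V R) : seidel Aᵀ = (seidel A)ᵀ := by
  rw [seidel, seidel, transpose_sub, transpose_add, transpose_smul, transpose_one]
  rfl

theorem IsTournament.transpose {A : Matrix V V R} (hA : IsTournament A) : IsTournament Aᵀ where
  zero_or_one x y := hA.zero_or_one y x
  add_transpose := by rw [transpose_transpose, add_comm, hA.add_transpose]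

variable [Fintype V]

theorem seidel_mulVec_one (A : Matrix V V R) (x : V) :
    (seidel A *ᵥ 1) x = 2 * ∑ z, A x z + 1 - Fintype.card V := by
  simp [seidel, mulVec, dotProduct, sum_add_distrib, sum_sub_distrib, mul_sum, one_apply]

theorem seidel_mul_transpose_apply_of_ne (A : Matrix V V R) {x y : V} (hxy : x ≠ y) :
    (seidel A * (seidel A)ᵀ) x y = 4 * ∑ z, A x z * A y z + 2 * (A x y + A y x)
      - 2 * (∑ z, A x z + ∑ z, A y z) + Fintype.card V - 2 := by
  have h4 (z : V) : 2 * A x z * (2 * A y z) = 4 * (A x z * A y z) := by ring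
  simp [seidel, mul_apply, one_apply, sub_mul, mul_sub, add_mul, mul_add, sum_add_distrib,
    sum_sub_distrib, mul_sum, hxy, h4]
  ring

theorem IsTournament.seidel_mul_transpose_apply_self {A : Matrix V V R} (hA : IsTournament A)
    (x : V) : (seidel A * (seidel A)ᵀ) x x = Fintype.card V - 1 := by
  have hsq (z : V) : seidel A x z * seidel A x z = 1 - (1 : Matrix V V R) x z := by
    rcases eq_or_ne x z with rfl | hxz
    · simp [seidel_eq_sub_transpose hA.add_transpose]
    · rcases hA.zero_or_one x z with h | h <;> norm_num [seidel, hxz, h]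
  simp [mul_apply, hsq, sum_sub_distrib, one_apply]

theorem IsTournament.seidel_mul_transpose_eq_iff [LinearOrder R] [IsStrictOrderedRing R]
    {A : Matrix V V R} (hA : IsTournament A) :
    seidel A * (seidel A)ᵀ = (Fintype.card V : R) • 1 - of (fun _ _ => 1) ↔
      (∀ x, 2 * ∑ z, A x z = Fintype.card V - 1) ∧
        ∀ x y, x ≠ y → 4 * ∑ z, A x z * A y z = Fintype.card V - 3 := by
  have hne {x y : V} (hxy : x ≠ y) :
      ((Fintype.card V : R) • 1 - of (fun _ _ => 1) : Matrix V V R) x y = -1 := by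
    simp [hxy]
  constructor
  · intro h
    have hcol : 1 ᵥ* seidel A = 0 := by
      refine vecMul_eq_zero_of_vecMul_mul_transpose_eq_zero ?_
      ext z
      simp [h, vecMul, dotProduct, sum_sub_distrib, one_apply]
    have hrow : seidel A *ᵥ 1 = 0 := by
      rw [← vecMul_transpose, transpose_seidel hA.add_transpose, vecMul_neg, hcol, neg_zero]
    have hdeg (x : V) : 2 * ∑ z, A x z = Fintype.card V - 1 := by
      have hx := congrFun hrow x
      rw [seidel_mulVec_one, Pi.zero_apply] at hx
      linear_combination hx
    refine ⟨hdeg, fun x y hxy => ?_⟩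
    have hxy' := congrFun₂ h x y
    rw [seidel_mul_transpose_apply_of_ne A hxy, hne hxy] at hxy'
    linear_combination hxy' - 2 * apply_add_apply_eq_one hA.add_transpose hxy + hdeg x + hdeg y
  · rintro ⟨hdeg, hcommon⟩
    ext x y
    rcases eq_or_ne x y with rfl | hxy
    · simp [hA.seidel_mul_transpose_apply_self]
    · rw [seidel_mul_transpose_apply_of_ne A hxy, hne hxy,
        apply_add_apply_eq_one hA.add_transpose hxy]
      linear_combination hcommon x y hxy - hdeg x - hdeg y

theorem seidel_transpose_mul_transpose {A : Matrix V V R}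
    (h : A + Aᵀ = of (fun _ _ => 1) - 1) :
    seidel Aᵀ * (seidel Aᵀ)ᵀ = seidel A * (seidel A)ᵀ := by
  rw [seidel_transpose, transpose_transpose, transpose_seidel h, neg_mul, mul_neg]

end Matrix

open Matrix

theorem stmt_10_general {V : Type*} [Fintype V] [DecidableEq V]
    (n : ℕ) (hn : Fintype.card V = n)
    (A : Matrix V V ℤ)
    (h01 : ∀ x y, A x y = 0 ∨ A x y = 1)
    (htour : A + A.transpose = (Matrix.of fun _ _ => (1 : ℤ)) - 1) :
    ((∀ x, 2 * (∑ z, A x z) = (n : ℤ) - 1 ∧ 2 * (∑ z, A z x) = (n : ℤ) - 1) ∧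
     (∀ x y, x ≠ y →
        4 * (∑ z, A x z * A y z) = (n : ℤ) - 3 ∧
        4 * (∑ z, A z x * A z y) = (n : ℤ) - 3)) ↔
    ((2 : ℤ) • A + 1 - Matrix.of fun _ _ => (1 : ℤ)) *
        ((2 : ℤ) • A + 1 - Matrix.of fun _ _ => (1 : ℤ)).transpose =
      (n : ℤ) • (1 : Matrix V V ℤ) - Matrix.of fun _ _ => (1 : ℤ) := by
  subst hn
  have hA : IsTournament A := ⟨h01, htour⟩
  change _ ↔ seidel A * (seidel A)ᵀ = _
  rw [← and_self (seidel A * _ = _)]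
  nth_rewrite 2 [← seidel_transpose_mul_transpose htour]
  rw [hA.seidel_mul_transpose_eq_iff, hA.transpose.seidel_mul_transpose_eq_iff]
  simp only [transpose_apply, forall_and]
  exact and_and_and_comm

/-- Let `A` be the adjacency matrix of a tournament on `n` vertices and
`S = 2A + I - J`. The tournament is doubly regular (every vertex has in- and out-degree
`(n-1)/2` and every pair of distinct vertices has `(n-3)/4` common out-neighbors and
`(n-3)/4` common in-neighbors) if and only if `S·Sᵀ = nI - J`. -/
theorem stmt_10 {V : Type*} [Fintype V] [DecidableEq V]
    (n : ℕ) (hn : Fintype.card V = n)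
    (A : Matrix V V ℤ)
    (h01 : ∀ x y, A x y = 0 ∨ A x y = 1)
    (hdiag : ∀ x, A x x = 0)
    (htour : A + A.transpose = (Matrix.of fun _ _ => (1 : ℤ)) - 1) :
    ((∀ x, 2 * (∑ z, A x z) = (n : ℤ) - 1 ∧ 2 * (∑ z, A z x) = (n : ℤ) - 1) ∧
     (∀ x y, x ≠ y →
        4 * (∑ z, A x z * A y z) = (n : ℤ) - 3 ∧
        4 * (∑ z, A z x * A z y) = (n : ℤ) - 3)) ↔
    ((2 : ℤ) • A + 1 - Matrix.of fun _ _ => (1 : ℤ)) *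
        ((2 : ℤ) • A + 1 - Matrix.of fun _ _ => (1 : ℤ)).transpose =
      (n : ℤ) • (1 : Matrix V V ℤ) - Matrix.of fun _ _ => (1 : ℤ) :=
  stmt_10_general n hn A h01 htour
end

section
/- Let Γ be a doubly regular tournament on n vertices, and let 𝓑 consist of all out-neighborhoods and all in-neighborhoods of vertices. Then (V,𝓑) is not a 3-design: it is impossible for every 3-subset of vertices to lie in the same number of blocks. -/
/-!
Inclusion–exclusion over the in-neighbourhoods of three vertices `x, y, z` of a tournament
counts the blocks through `{x, y, z}`: outside the triple, "not an in-neighbour of any of them"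
means "an out-neighbour of all of them", while inside the triple the same condition picks out
its sinks. So, when all in-degrees equal `k` and all pairwise common in-degrees equal `m`,
the number of blocks through a triple is `n + 3m - 3k - s`, where `s` is the number of sinks
of the triple: `1` for a transitive triple and `0` for a cyclic one. A doubly regular
tournament has triples of both kinds.
-/

open Finset

lemma card_filter_and_and_add_card_filter_not_and_not {α : Type*} (s : Finset α)
    (p q t : α → Prop) [DecidablePred p] [DecidablePred q] [DecidablePred t] :
    #{w ∈ s | p w ∧ q w ∧ t w} + #{w ∈ s | ¬p w ∧ ¬q w ∧ ¬t w} +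
      #{w ∈ s | p w} + #{w ∈ s | q w} + #{w ∈ s | t w} =
    #s + #{w ∈ s | p w ∧ q w} + #{w ∈ s | p w ∧ t w} + #{w ∈ s | q w ∧ t w} := by
  simp only [card_filter, card_eq_sum_ones s, ← sum_add_distrib]
  refine sum_congr rfl fun w _ => ?_
  by_cases hp : p w <;> by_cases hq : q w <;> by_cases ht : t w <;> simp [hp, hq, ht]

namespace Tournament

variable {V : Type*} {r : V → V → Prop} [DecidableRel r]

lemma filter_sink_eq_singleton_of_transitive [DecidableEq V] (hirr : ∀ x, ¬r x x)
    (htour : ∀ x y : V, x ≠ y → (r x y ↔ ¬r y x)) {x y z : V}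
    (hxy : r x y) (hyz : r y z) (hxz : r x z) :
    {w ∈ ({x, y, z} : Finset V) | ¬r w x ∧ ¬r w y ∧ ¬r w z} = {z} := by
  have hzx : ¬r z x := (htour x z fun e => hirr x (e ▸ hxz)).1 hxz
  have hzy : ¬r z y := (htour y z fun e => hirr y (e ▸ hyz)).1 hyz
  simp [filter_insert, hxy, hyz, hzx, hzy, hirr]

lemma filter_sink_eq_empty_of_cyclic [DecidableEq V] {x y z : V}
    (hxy : r x y) (hyz : r y z) (hzx : r z x) :
    {w ∈ ({x, y, z} : Finset V) | ¬r w x ∧ ¬r w y ∧ ¬r w z} = ∅ := by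
  simp [filter_insert, hxy, hyz, hzx]

lemma card_filter_not_rel_three_eq_card_common_out_add [Fintype V] [DecidableEq V]
    (hirr : ∀ x, ¬r x x) (htour : ∀ x y : V, x ≠ y → (r x y ↔ ¬r y x)) (x y z : V) :
    #{w | ¬r w x ∧ ¬r w y ∧ ¬r w z} =
      #{w | r x w ∧ r y w ∧ r z w} +
        #{w ∈ ({x, y, z} : Finset V) | ¬r w x ∧ ¬r w y ∧ ¬r w z} := by
  rw [← card_filter_add_card_filter_not (s := {w | ¬r w x ∧ ¬r w y ∧ ¬r w z})
    (· ∉ ({x, y, z} : Finset V)), filter_filter, filter_filter]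
  congr 2
  · ext w
    simp only [mem_filter, mem_univ, true_and, mem_insert, mem_singleton, not_or]
    constructor
    · rintro ⟨⟨hx, hy, hz⟩, hwx, hwy, hwz⟩
      exact ⟨(htour x w (Ne.symm hwx)).2 hx, (htour y w (Ne.symm hwy)).2 hy,
        (htour z w (Ne.symm hwz)).2 hz⟩
    · rintro ⟨hx, hy, hz⟩
      have hne : ∀ {a b}, r a b → b ≠ a := fun h e => hirr _ (e ▸ h)
      exact ⟨⟨(htour x w (hne hx).symm).1 hx, (htour y w (hne hy).symm).1 hy,
        (htour z w (hne hz).symm).1 hz⟩, hne hx, hne hy, hne hz⟩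
  · ext w
    simp only [mem_filter, mem_univ, true_and, not_not]
    tauto

theorem card_common_in_add_card_common_out [Fintype V] [DecidableEq V]
    (hirr : ∀ x, ¬r x x)
    (htour : ∀ x y : V, x ≠ y → (r x y ↔ ¬r y x)) (x y z : V) :
    #{w | r w x ∧ r w y ∧ r w z} + #{w | r x w ∧ r y w ∧ r z w} +
      #{w ∈ ({x, y, z} : Finset V) | ¬r w x ∧ ¬r w y ∧ ¬r w z} +
      #{w | r w x} + #{w | r w y} + #{w | r w z} =
    Fintype.card V + #{w | r w x ∧ r w y} + #{w | r w x ∧ r w z} + #{w | r w y ∧ r w z} := by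
  have := card_filter_and_and_add_card_filter_not_and_not univ (r · x) (r · y) (r · z)
  rw [card_filter_not_rel_three_eq_card_common_out_add hirr htour, card_univ] at this
  omega

lemma exists_cyclic_of_card_lt [Fintype V] (hirr : ∀ x, ¬r x x)
    (htour : ∀ x y : V, x ≠ y → (r x y ↔ ¬r y x)) {x y : V}
    (hxy : r x y) (h : #{w | r x w ∧ r y w} < #{w | r y w}) : ∃ z, r y z ∧ r z x := by
  have hsplit := card_filter_add_card_filter_not (s := {w | r y w}) (r x ·)
  obtain ⟨z, hz⟩ : ({w | r y w ∧ ¬r x w} : Finset V).Nonempty := by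
    rw [← card_pos]
    simp only [filter_filter] at hsplit
    simp only [and_comm (a := r x _)] at h
    omega
  obtain ⟨hyz, hxz⟩ : r y z ∧ ¬r x z := by simpa using hz
  have hzx : z ≠ x := by
    rintro rfl
    exact (htour z y fun e => hirr z (e ▸ hxy)).1 hxy hyz
  exact ⟨z, hyz, not_not.1 (mt (htour x z hzx.symm).2 hxz)⟩

end Tournament

open Tournament in
theorem stmt_12_general {V : Type*} [Fintype V] [DecidableEq V]
    (n : ℕ) (hn : Fintype.card V = n) (hn7 : 7 ≤ n)
    (r : V → V → Prop) [DecidableRel r]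
    (hirr : ∀ x, ¬r x x)
    (htour : ∀ x y : V, x ≠ y → (r x y ↔ ¬r y x))
    (hout : ∀ x, (Finset.univ.filter fun z => r x z).card = (n - 1) / 2)
    (hin : ∀ x, (Finset.univ.filter fun z => r z x).card = (n - 1) / 2)
    (hcoout : ∀ x y : V, x ≠ y →
      (Finset.univ.filter fun z => r x z ∧ r y z).card = (n - 3) / 4)
    (hcoin : ∀ x y : V, x ≠ y →
      (Finset.univ.filter fun z => r z x ∧ r z y).card = (n - 3) / 4) :
    ¬∃ lam : ℕ, ∀ x y z : V, x ≠ y → x ≠ z → y ≠ z →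
      (Finset.univ.filter fun w => r w x ∧ r w y ∧ r w z).card +
      (Finset.univ.filter fun w => r x w ∧ r y w ∧ r z w).card = lam := by
  rintro ⟨lam, hlam⟩
  have hne : ∀ {a b}, r a b → a ≠ b := fun h e => hirr _ (e ▸ h)
  obtain ⟨x⟩ : Nonempty V := Fintype.card_pos_iff.1 (by omega)
  obtain ⟨y, hxy⟩ : ∃ y, r x y := by
    have : ({y | r x y} : Finset V).Nonempty := card_pos.1 (by rw [hout x]; omega)
    simpa [Finset.Nonempty] using this
  obtain ⟨z, hxz, hyz⟩ : ∃ z, r x z ∧ r y z := by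
    have : ({z | r x z ∧ r y z} : Finset V).Nonempty :=
      card_pos.1 (by rw [hcoout x y (hne hxy)]; omega)
    simpa [Finset.Nonempty] using this
  obtain ⟨u, hyu, hux⟩ :=
    exists_cyclic_of_card_lt hirr htour hxy (by rw [hcoout x y (hne hxy), hout y]; omega)
  have htrans := card_common_in_add_card_common_out hirr htour x y z
  have hcyc := card_common_in_add_card_common_out hirr htour x y u
  rw [filter_sink_eq_singleton_of_transitive hirr htour hxy hyz hxz, hlam x y z (hne hxy)
    (hne hxz) (hne hyz), hcoin x y (hne hxy), hcoin x z (hne hxz), hcoin y z (hne hyz)] at htrans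
  rw [filter_sink_eq_empty_of_cyclic hxy hyu hux, hlam x y u (hne hxy) (hne hux).symm
    (hne hyu), hcoin x y (hne hxy), hcoin x u (hne hux).symm, hcoin y u (hne hyu)] at hcyc
  simp only [hin, card_singleton, card_empty] at htrans hcyc
  omega

/-- For a doubly regular tournament on `n ≥ 7` vertices, the collection of
all out-neighborhoods and all in-neighborhoods is not a 3-design: it is impossible for
every 3-subset of vertices to lie in the same number of blocks. -/
theorem stmt_12 {V : Type*} [Fintype V] [DecidableEq V]
    (n : ℕ) (hn : Fintype.card V = n) (hn4 : n % 4 = 3) (hn7 : 7 ≤ n)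
    (r : V → V → Prop) [DecidableRel r]
    (hirr : ∀ x, ¬r x x)
    (htour : ∀ x y : V, x ≠ y → (r x y ↔ ¬r y x))
    (hout : ∀ x, (Finset.univ.filter fun z => r x z).card = (n - 1) / 2)
    (hin : ∀ x, (Finset.univ.filter fun z => r z x).card = (n - 1) / 2)
    (hcoout : ∀ x y : V, x ≠ y →
      (Finset.univ.filter fun z => r x z ∧ r y z).card = (n - 3) / 4)
    (hcoin : ∀ x y : V, x ≠ y →
      (Finset.univ.filter fun z => r z x ∧ r z y).card = (n - 3) / 4) :
    ¬∃ lam : ℕ, ∀ x y z : V, x ≠ y → x ≠ z → y ≠ z →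
      (Finset.univ.filter fun w => r w x ∧ r w y ∧ r w z).card +
      (Finset.univ.filter fun w => r x w ∧ r y w ∧ r z w).card = lam :=
  stmt_12_general n hn hn7 r hirr htour hout hin hcoout hcoin
end

section
/- Let A be the adjacency matrix of a strongly regular graph with parameters (v,k,λ,μ) where μ = λ+1 or μ = λ+3. Then (A+I)² = (k+1)I + (λ+2)A + μ(J - I - A), and consequently the incidence structure whose blocks are the supports of the rows of A + I (i.e., the closed neighborhoods) is a 2-(v, k+1, λ') adesign with λ' ∈ {λ+1, λ+2}: every pair of distinct vertices lies in either λ' or λ'+1 of the closed neighborhoods; in particular, for μ = λ+1, each pair lies in λ+1 or λ+2 closed neighborhoods. -/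
open Finset

lemma key {V : Type*} [Fintype V] [DecidableEq V]
    (G : SimpleGraph V) [DecidableRel G.Adj]
    (v k l m : ℕ) (h : G.IsSRGWith v k l m) (x y : V) (hxy : x ≠ y) :
    (Finset.univ.filter fun z => (z = x ∨ G.Adj z x) ∧ (z = y ∨ G.Adj z y)).card
      = if G.Adj x y then l + 2 else m := by
  have hcn : Fintype.card (G.commonNeighbors x y)
      = (Finset.univ.filter fun z => G.Adj z x ∧ G.Adj z y).card := by
    rw [← Set.toFinset_card]
    congr 1
    ext z
    simp [SimpleGraph.mem_commonNeighbors, G.adj_comm]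
  by_cases ha : G.Adj x y
  · rw [if_pos ha]
    have hset : (Finset.univ.filter fun z => (z = x ∨ G.Adj z x) ∧ (z = y ∨ G.Adj z y))
        = insert x (insert y (Finset.univ.filter fun z => G.Adj z x ∧ G.Adj z y)) := by
      ext z
      simp only [mem_filter, mem_univ, true_and, mem_insert]
      constructor
      · rintro ⟨hx | hx, hy | hy⟩
        · exact absurd (hx ▸ hy) hxy
        · exact Or.inl hx
        · exact Or.inr (Or.inl hy)
        · exact Or.inr (Or.inr ⟨hx, hy⟩)
      · rintro (rfl | rfl | ⟨h1, h2⟩)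
        · exact ⟨Or.inl rfl, Or.inr ha⟩
        · exact ⟨Or.inr ha.symm, Or.inl rfl⟩
        · exact ⟨Or.inr h1, Or.inr h2⟩
    rw [hset, card_insert_of_notMem, card_insert_of_notMem]
    · rw [← hcn, h.of_adj x y ha]
    · simp [G.irrefl]
    · simp only [mem_insert, mem_filter, mem_univ, true_and]
      push_neg
      exact ⟨hxy, fun h1 _ => (G.irrefl h1)⟩
  · rw [if_neg ha]
    have hset : (Finset.univ.filter fun z => (z = x ∨ G.Adj z x) ∧ (z = y ∨ G.Adj z y))
        = Finset.univ.filter fun z => G.Adj z x ∧ G.Adj z y := by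
      ext z
      simp only [mem_filter, mem_univ, true_and]
      constructor
      · rintro ⟨hx | hx, hy | hy⟩
        · exact absurd (hx ▸ hy) hxy
        · subst hx; exact absurd hy ha
        · subst hy; exact absurd hx.symm ha
        · exact ⟨hx, hy⟩
      · rintro ⟨h1, h2⟩; exact ⟨Or.inr h1, Or.inr h2⟩
    rw [hset, ← hcn, h.of_not_adj hxy ha]

lemma complA {V : Type*} [Fintype V] [DecidableEq V]
    (G : SimpleGraph V) [DecidableRel G.Adj] :
    Gᶜ.adjMatrix ℤ = (Matrix.of fun _ _ => (1 : ℤ)) - 1 - G.adjMatrix ℤ := by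
  ext i j
  by_cases hij : i = j
  · subst hij; simp [Matrix.one_apply]
  · by_cases ha : G.Adj i j <;>
      simp [Matrix.one_apply, hij, ha, SimpleGraph.compl_adj]

/-- If `A` is the adjacency matrix of a strongly regular graph with
parameters `(v,k,λ,μ)` where `μ = λ+1` or `μ = λ+3`, then
`(A+I)² = (k+1)I + (λ+2)A + μ(J-I-A)`, and the closed neighborhoods form a
2-`(v,k+1,λ')` adesign with `λ' ∈ {λ+1, λ+2}`: every pair of distinct vertices lies in
`λ'` or `λ'+1` closed neighborhoods, where for `μ = λ+1` each pair lies in `λ+1` or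
`λ+2` closed neighborhoods. -/
theorem stmt_13 {V : Type*} [Fintype V] [DecidableEq V]
    (G : SimpleGraph V) [DecidableRel G.Adj]
    (v k l m : ℕ) (h : G.IsSRGWith v k l m) (hm : m = l + 1 ∨ m = l + 3) :
    ((G.adjMatrix ℤ + 1) * (G.adjMatrix ℤ + 1) =
      ((k : ℤ) + 1) • (1 : Matrix V V ℤ) + ((l : ℤ) + 2) • G.adjMatrix ℤ +
        (m : ℤ) • ((Matrix.of fun _ _ => (1 : ℤ)) - 1 - G.adjMatrix ℤ)) ∧
    (∃ lam' : ℕ, (lam' = l + 1 ∨ lam' = l + 2) ∧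
      ∀ x y : V, x ≠ y →
        (Finset.univ.filter fun z => (z = x ∨ G.Adj z x) ∧ (z = y ∨ G.Adj z y)).card = lam' ∨
        (Finset.univ.filter fun z => (z = x ∨ G.Adj z x) ∧ (z = y ∨ G.Adj z y)).card = lam' + 1) ∧
    (m = l + 1 → ∀ x y : V, x ≠ y →
      (Finset.univ.filter fun z => (z = x ∨ G.Adj z x) ∧ (z = y ∨ G.Adj z y)).card = l + 1 ∨
      (Finset.univ.filter fun z => (z = x ∨ G.Adj z x) ∧ (z = y ∨ G.Adj z y)).card = l + 2) := by
  refine ⟨?_, ?_, ?_⟩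
  · have h2 := h.matrix_eq (α := ℤ)
    rw [complA] at h2
    have e1 : (G.adjMatrix ℤ + 1) * (G.adjMatrix ℤ + 1)
        = G.adjMatrix ℤ ^ 2 + 2 • G.adjMatrix ℤ + 1 := by
      rw [sq]; noncomm_ring
    rw [e1, h2]
    simp only [← Nat.cast_smul_eq_nsmul (R := ℤ)]
    module
  · rcases hm with hm | hm
    · refine ⟨l + 1, Or.inl rfl, fun x y hxy => ?_⟩
      rw [key G v k l m h x y hxy]
      by_cases ha : G.Adj x y
      · simp [ha]
      · simp [ha, hm]
    · refine ⟨l + 2, Or.inr rfl, fun x y hxy => ?_⟩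
      rw [key G v k l m h x y hxy]
      by_cases ha : G.Adj x y
      · simp [ha]
      · simp [ha, hm]
  · intro hm1 x y hxy
    rw [key G v k l m h x y hxy]
    by_cases ha : G.Adj x y
    · simp [ha]
    · simp [ha, hm1]
end

section
/- Let A and A' be adjacency matrices (on the same vertex set of size v) of two strongly regular graphs, each with parameters (v,k,λ,μ), such that A + A' is a 0-1 matrix and μ = λ + 1. Then every pair of distinct vertices is contained in either 2μ - 1 or 2μ of the blocks formed by the neighborhoods in the two graphs (i.e., supports of rows of A together with supports of rows of A'). -/
namespace SimpleGraph

variable {V : Type*} [Fintype V] (G : SimpleGraph V) [DecidableRel G.Adj]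

theorem card_filter_adj_adj_eq_card_commonNeighbors (x y : V) :
    (Finset.univ.filter fun z => G.Adj z x ∧ G.Adj z y).card =
      Fintype.card (G.commonNeighbors x y) := by
  rw [← Set.toFinset_card]
  congr 1
  ext z
  simp [mem_commonNeighbors, adj_comm]

variable {G} {G' : SimpleGraph V} [DecidableRel G'.Adj] {v k l m : ℕ}

theorem IsSRGWith.card_commonNeighbors_add_card_commonNeighbors
    (h : G.IsSRGWith v k l m) (h' : G'.IsSRGWith v k l m)
    (hdisj : ∀ x y : V, ¬(G.Adj x y ∧ G'.Adj x y)) {x y : V} (hxy : x ≠ y) :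
    Fintype.card (G.commonNeighbors x y) + Fintype.card (G'.commonNeighbors x y) = l + m ∨
      Fintype.card (G.commonNeighbors x y) + Fintype.card (G'.commonNeighbors x y) = 2 * m := by
  by_cases hG : G.Adj x y
  · have hG' : ¬G'.Adj x y := fun hG' => hdisj x y ⟨hG, hG'⟩
    exact .inl (by rw [h.of_adj x y hG, h'.of_not_adj hxy hG'])
  by_cases hG' : G'.Adj x y
  · exact .inl (by rw [h.of_not_adj hxy hG, h'.of_adj x y hG', add_comm])
  · exact .inr (by rw [h.of_not_adj hxy hG, h'.of_not_adj hxy hG', two_mul])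

end SimpleGraph

theorem stmt_14_general {V : Type*} [Fintype V]
    (G G' : SimpleGraph V) [DecidableRel G.Adj] [DecidableRel G'.Adj]
    (v k l m : ℕ) (h : G.IsSRGWith v k l m) (h' : G'.IsSRGWith v k l m)
    (hm : m = l + 1)
    (hdisj : ∀ x y : V, ¬(G.Adj x y ∧ G'.Adj x y)) :
    ∀ x y : V, x ≠ y →
      (Finset.univ.filter fun z => G.Adj z x ∧ G.Adj z y).card +
        (Finset.univ.filter fun z => G'.Adj z x ∧ G'.Adj z y).card = 2 * m - 1 ∨
      (Finset.univ.filter fun z => G.Adj z x ∧ G.Adj z y).card +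
        (Finset.univ.filter fun z => G'.Adj z x ∧ G'.Adj z y).card = 2 * m := by
  intro x y hxy
  simp only [SimpleGraph.card_filter_adj_adj_eq_card_commonNeighbors]
  have := h.card_commonNeighbors_add_card_commonNeighbors h' hdisj hxy
  omega

/-- If `A`, `A'` are adjacency matrices of two edge-disjoint strongly
regular graphs on the same vertex set, both with parameters `(v,k,λ,μ)` and `μ = λ+1`,
then every pair of distinct vertices is contained in either `2μ-1` or `2μ` of the blocks
formed by the neighborhoods in the two graphs. -/
theorem stmt_14 {V : Type*} [Fintype V] [DecidableEq V]
    (G G' : SimpleGraph V) [DecidableRel G.Adj] [DecidableRel G'.Adj]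
    (v k l m : ℕ) (h : G.IsSRGWith v k l m) (h' : G'.IsSRGWith v k l m)
    (hm : m = l + 1)
    (hdisj : ∀ x y : V, ¬(G.Adj x y ∧ G'.Adj x y)) :
    ∀ x y : V, x ≠ y →
      (Finset.univ.filter fun z => G.Adj z x ∧ G.Adj z y).card +
        (Finset.univ.filter fun z => G'.Adj z x ∧ G'.Adj z y).card = 2 * m - 1 ∨
      (Finset.univ.filter fun z => G.Adj z x ∧ G.Adj z y).card +
        (Finset.univ.filter fun z => G'.Adj z x ∧ G'.Adj z y).card = 2 * m :=
  stmt_14_general G G' v k l m h h' hm hdisj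
end

section
/- Let Γ be a strongly regular graph with parameters (v, k, λ, λ+1), fix a vertex w with neighborhood R = N(w), and let 𝓑 = {R ∩ N(x) : x ≠ w}. Let 𝓑_∞ be obtained from 𝓑 by adjoining a new point ∞ to every member of size λ, leaving members of size λ+1 unchanged. Then for every x ∈ R, the pair {x, ∞} lies in exactly λ blocks of 𝓑_∞. -/
lemma common_card {V : Type*} [Fintype V] [DecidableEq V]
    (G : SimpleGraph V) [DecidableRel G.Adj] (a b : V) :
    Fintype.card (G.commonNeighbors a b) =
      (G.neighborFinset a ∩ G.neighborFinset b).card := by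
  rw [← Set.toFinset_card]
  congr 1
  ext y
  simp [SimpleGraph.mem_commonNeighbors]

/-- Let `Γ` be a strongly regular graph with parameters `(v,k,λ,λ+1)`,
`w` a fixed vertex with neighborhood `R = N(w)`, with blocks `R ∩ N(y)` for `y ≠ w`,
the point `∞` being adjoined to exactly those blocks of size `λ`. Then for every
`x ∈ R`, the pair `{x, ∞}` lies in exactly `λ` blocks: the number of vertices `y ≠ w`
with `x ∈ N(y)` and `|R ∩ N(y)| = λ` equals `λ`. -/
theorem stmt_15 {V : Type*} [Fintype V] [DecidableEq V]
    (G : SimpleGraph V) [DecidableRel G.Adj]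
    (v k l : ℕ) (h : G.IsSRGWith v k l (l + 1)) (w : V) :
    ∀ x : V, G.Adj w x →
      (Finset.univ.filter fun y : V => y ≠ w ∧ G.Adj y x ∧
        (G.neighborFinset w ∩ G.neighborFinset y).card = l).card = l := by
  intro x hwx
  have key : (Finset.univ.filter fun y : V => y ≠ w ∧ G.Adj y x ∧
      (G.neighborFinset w ∩ G.neighborFinset y).card = l)
      = G.neighborFinset w ∩ G.neighborFinset x := by
    ext y
    simp only [Finset.mem_filter, Finset.mem_univ, true_and, Finset.mem_inter,
      SimpleGraph.mem_neighborFinset]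
    constructor
    · rintro ⟨hne, hyx, hcard⟩
      refine ⟨?_, hyx.symm⟩
      by_contra hnadj
      have := h.of_not_adj (fun e => hne e.symm) hnadj
      rw [common_card] at this
      omega
    · rintro ⟨hwy, hxy⟩
      exact ⟨fun e => G.loopless.irrefl w (e ▸ hwy), hxy.symm,
        by rw [← common_card]; exact h.of_adj w y hwy⟩
  rw [key, ← common_card]
  exact h.of_adj w x hwx
end

section
/- Let n > 3 be odd, G = ℤ_n × ℤ_3, and fix a total order < on ℤ_n. Define the block collection 𝓑 to consist of: (a) {(a,i),(b,i),(((n+1)/2)(a+b), i+1)} for a < b in ℤ_n and i ∈ ℤ_3; (b) {(a,i),(b-1,i),(((n+1)/2)(a+b), i+1)} for a,b ∈ ℤ_n with a ≮ b, a ≠ b-1, and i ∈ ℤ_3; (c) {(a,0),(a,1),(a,2)} for a ∈ ℤ_n. Then every pair of distinct points of G lies in either 1 or 2 blocks of 𝓑, and both values occur; i.e., (G,𝓑) is a 2-(3n,3,1) adesign. -/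
/-- For odd `n > 3`, `G = ℤ_n × ℤ_3`, and any total order on `ℤ_n`, the
block collection 𝓑 of (a) `{(a,i),(b,i),(((n+1)/2)(a+b),i+1)}` for `a < b`,
(b) `{(a,i),(b-1,i),(((n+1)/2)(a+b),i+1)}` for `a ≮ b`, `a ≠ b-1`, and
(c) `{(a,0),(a,1),(a,2)}`, is a 2-`(3n,3,1)` adesign: every pair of distinct points lies
in 1 or 2 blocks, and both values occur. -/
theorem stmt_16 (n : ℕ) [NeZero n] (hn : 3 < n) (hodd : Odd n)
    (lt : ZMod n → ZMod n → Prop) [DecidableRel lt]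
    (hlt : IsStrictTotalOrder (ZMod n) lt)
    (𝓑 : Finset (Finset (ZMod n × ZMod 3)))
    (h𝓑 : 𝓑 =
      (((Finset.univ : Finset (ZMod n × ZMod n × ZMod 3)).filter fun p =>
          lt p.1 p.2.1).image fun p =>
        ({(p.1, p.2.2), (p.2.1, p.2.2),
          ((((n + 1) / 2 : ℕ) : ZMod n) * (p.1 + p.2.1), p.2.2 + 1)} :
          Finset (ZMod n × ZMod 3))) ∪
      (((Finset.univ : Finset (ZMod n × ZMod n × ZMod 3)).filter fun p =>
          ¬lt p.1 p.2.1 ∧ p.1 ≠ p.2.1 - 1).image fun p =>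
        ({(p.1, p.2.2), (p.2.1 - 1, p.2.2),
          ((((n + 1) / 2 : ℕ) : ZMod n) * (p.1 + p.2.1), p.2.2 + 1)} :
          Finset (ZMod n × ZMod 3))) ∪
      ((Finset.univ : Finset (ZMod n)).image fun a =>
        ({(a, 0), (a, 1), (a, 2)} : Finset (ZMod n × ZMod 3)))) :
    (∀ p q : ZMod n × ZMod 3, p ≠ q →
      (𝓑.filter fun B => p ∈ B ∧ q ∈ B).card = 1 ∨
      (𝓑.filter fun B => p ∈ B ∧ q ∈ B).card = 2) ∧
    (∃ p q : ZMod n × ZMod 3, p ≠ q ∧ (𝓑.filter fun B => p ∈ B ∧ q ∈ B).card = 1) ∧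
    (∃ p q : ZMod n × ZMod 3, p ≠ q ∧ (𝓑.filter fun B => p ∈ B ∧ q ∈ B).card = 2) := by
  classical
  haveI : Fact (1 < n) := ⟨by omega⟩
  haveI := hlt
  set K : ZMod n := (((n + 1) / 2 : ℕ) : ZMod n) with hKdef
  have h2K : (2 : ZMod n) * K = 1 := by
    have h2 : (n + 1) / 2 * 2 = n + 1 := Nat.div_mul_cancel (by obtain ⟨m, rfl⟩ := hodd; omega)
    have h3 := congrArg (Nat.cast : ℕ → ZMod n) h2
    push_cast at h3
    rw [ZMod.natCast_self] at h3
    linear_combination h3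
  have h10 : (1 : ZMod n) ≠ 0 := one_ne_zero
  have hcancel : ∀ u v : ZMod n, 2 * u = 2 * v → u = v := fun u v huv => by
    linear_combination K * huv + (v - u) * h2K
  have hmem : ∀ B : Finset (ZMod n × ZMod 3),
      B ∈ 𝓑 ↔
        (∃ a b l, lt a b ∧ B = {(a, l), (b, l), (K * (a + b), l + 1)}) ∨
        (∃ a b l, (¬lt a b ∧ a ≠ b - 1) ∧ B = {(a, l), (b - 1, l), (K * (a + b), l + 1)}) ∨
        ∃ a, B = {(a, 0), (a, 1), (a, 2)} := by
    intro B
    rw [h𝓑]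
    simp only [Finset.mem_union, Finset.mem_image, Finset.mem_filter, Finset.mem_univ, true_and,
      Prod.exists]
    constructor
    · rintro ((⟨a, b, l, h1, h2⟩ | ⟨a, b, l, h1, h2⟩) | ⟨a, h2⟩)
      · exact Or.inl ⟨a, b, l, h1, h2.symm⟩
      · exact Or.inr (Or.inl ⟨a, b, l, h1, h2.symm⟩)
      · exact Or.inr (Or.inr ⟨a, h2.symm⟩)
    · rintro (⟨a, b, l, h1, h2⟩ | ⟨a, b, l, h1, h2⟩ | ⟨a, h2⟩)
      · exact Or.inl (Or.inl ⟨a, b, l, h1, h2.symm⟩)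
      · exact Or.inl (Or.inr ⟨a, b, l, h1, h2.symm⟩)
      · exact Or.inr ⟨a, h2.symm⟩
  -- ZMod 3 facts
  have z1 : ∀ u : ZMod 3, u + 1 ≠ u := by decide
  have z2 : ∀ u : ZMod 3, u ≠ u + 1 := by decide
  have z3 : ∀ u : ZMod 3, u + 1 + 1 ≠ u := by decide
  have z4 : ∀ u : ZMod 3, u ≠ u + 1 + 1 := by decide
  have zall : ∀ u : ZMod 3, u = 0 ∨ u = 1 ∨ u = 2 := by decide
  have zA : ∀ (a b : ZMod n) (i : ZMod 3), lt a b →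
      ({(a, i), (b, i), (K * (a + b), i + 1)} : Finset (ZMod n × ZMod 3)) ∈ 𝓑 :=
    fun a b i h => (hmem _).mpr (Or.inl ⟨a, b, i, h, rfl⟩)
  have zBm : ∀ (a b : ZMod n) (i : ZMod 3), ¬lt a b → a ≠ b - 1 →
      ({(a, i), (b - 1, i), (K * (a + b), i + 1)} : Finset (ZMod n × ZMod 3)) ∈ 𝓑 :=
    fun a b i h h' => (hmem _).mpr (Or.inr (Or.inl ⟨a, b, i, ⟨h, h'⟩, rfl⟩))
  have zC : ∀ a : ZMod n, ({(a, 0), (a, 1), (a, 2)} : Finset (ZMod n × ZMod 3)) ∈ 𝓑 :=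
    fun a => (hmem _).mpr (Or.inr (Or.inr ⟨a, rfl⟩))
  have sameSub : ∀ (x y : ZMod n) (i : ZMod 3), x ≠ y →
      ∀ B ∈ 𝓑.filter fun B => (x, i) ∈ B ∧ (y, i) ∈ B,
        B = {(x, i), (y, i), (K * (x + y), i + 1)} ∨
        B = {(x, i), (y, i), (K * (x + y + 1), i + 1)} := by
    intro x y i hxy B hB
    rw [Finset.mem_filter] at hB
    obtain ⟨hBm, hp, hq⟩ := hB
    rcases (hmem B).mp hBm with ⟨a, b, l, hab, rfl⟩ | ⟨a, b, l, ⟨hab, hab'⟩, rfl⟩ | ⟨a, rfl⟩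
    · simp only [Finset.mem_insert, Finset.mem_singleton, Prod.mk.injEq] at hp hq
      rcases hp with ⟨rfl, rfl⟩ | ⟨rfl, rfl⟩ | ⟨hx3, hi3⟩
      · rcases hq with ⟨rfl, -⟩ | ⟨rfl, -⟩ | ⟨hy3, hi3⟩
        · exact absurd rfl hxy
        · exact Or.inl rfl
        · exact absurd hi3 (z2 _)
      · rcases hq with ⟨rfl, -⟩ | ⟨rfl, -⟩ | ⟨hy3, hi3⟩
        · refine Or.inl ?_
          rw [add_comm y x]
          exact Finset.insert_comm _ _ _
        · exact absurd rfl hxy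
        · exact absurd hi3 (z2 _)
      · rcases hq with ⟨-, hl⟩ | ⟨-, hl⟩ | ⟨hy3, -⟩
        · rw [hl] at hi3; exact absurd hi3 (z2 _)
        · rw [hl] at hi3; exact absurd hi3 (z2 _)
        · exact absurd (hx3.trans hy3.symm) hxy
    · simp only [Finset.mem_insert, Finset.mem_singleton, Prod.mk.injEq] at hp hq
      rcases hp with ⟨rfl, rfl⟩ | ⟨hx2, rfl⟩ | ⟨hx3, hi3⟩
      · rcases hq with ⟨rfl, -⟩ | ⟨hy2, -⟩ | ⟨hy3, hi3⟩
        · exact absurd rfl hxy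
        · refine Or.inr ?_
          have hb : b = y + 1 := by linear_combination -hy2
          subst hb
          have e1 : y + 1 - 1 = y := by ring
          have e2 : x + (y + 1) = x + y + 1 := by ring
          rw [e1, e2]
        · exact absurd hi3 (z2 _)
      · rcases hq with ⟨rfl, -⟩ | ⟨hy2, -⟩ | ⟨hy3, hi3⟩
        · refine Or.inr ?_
          have hb : b = x + 1 := by linear_combination -hx2
          subst hb
          have e1 : x + 1 - 1 = x := by ring
          have e2 : y + (x + 1) = x + y + 1 := by ring
          rw [e1, e2]
          exact Finset.insert_comm _ _ _
        · exact absurd (hx2.trans hy2.symm) hxy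
        · exact absurd hi3 (z2 _)
      · rcases hq with ⟨-, hl⟩ | ⟨-, hl⟩ | ⟨hy3, -⟩
        · rw [hl] at hi3; exact absurd hi3 (z2 _)
        · rw [hl] at hi3; exact absurd hi3 (z2 _)
        · exact absurd (hx3.trans hy3.symm) hxy
    · simp only [Finset.mem_insert, Finset.mem_singleton, Prod.mk.injEq] at hp hq
      have hx : x = a := by tauto
      have hy : y = a := by tauto
      exact absurd (hx.trans hy.symm) hxy
  have sameLow : ∀ (x y : ZMod n) (i : ZMod 3), x ≠ y →
      (𝓑.filter fun B => (x, i) ∈ B ∧ (y, i) ∈ B).Nonempty := by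
    intro x y i hxy
    rcases trichotomous_of lt x y with h | h | h
    · exact ⟨_, Finset.mem_filter.mpr ⟨zA x y i h, by simp, by simp⟩⟩
    · exact absurd h hxy
    · exact ⟨_, Finset.mem_filter.mpr ⟨zA y x i h, by simp, by simp⟩⟩
  have crossSub : ∀ (x y : ZMod n) (i : ZMod 3),
      ∀ B ∈ 𝓑.filter fun B => (x, i) ∈ B ∧ (y, i + 1) ∈ B,
        (x ≠ y ∧ B = {(x, i), (2 * y - x, i), (y, i + 1)}) ∨
        (x ≠ 2 * y - x - 1 ∧ B = {(x, i), (2 * y - x - 1, i), (y, i + 1)}) ∨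
        (x = y ∧ B = {(x, 0), (x, 1), (x, 2)}) := by
    intro x y i B hB
    rw [Finset.mem_filter] at hB
    obtain ⟨hBm, hp, hq⟩ := hB
    rcases (hmem B).mp hBm with ⟨a, b, l, hab, rfl⟩ | ⟨a, b, l, ⟨hab, hab'⟩, rfl⟩ | ⟨a, rfl⟩
    · simp only [Finset.mem_insert, Finset.mem_singleton, Prod.mk.injEq] at hp hq
      -- q must be the third slot
      rcases hq with ⟨-, hl⟩ | ⟨-, hl⟩ | ⟨hy3, hl3⟩
      · rcases hp with ⟨-, rfl⟩ | ⟨-, rfl⟩ | ⟨-, rfl⟩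
        · exact absurd hl (z1 _)
        · exact absurd hl (z1 _)
        · exact absurd hl (z3 _)
      · rcases hp with ⟨-, rfl⟩ | ⟨-, rfl⟩ | ⟨-, rfl⟩
        · exact absurd hl (z1 _)
        · exact absurd hl (z1 _)
        · exact absurd hl (z3 _)
      · have hl : l = i := (add_right_cancel hl3).symm
        subst hl
        have hab2 : a + b = 2 * y := by linear_combination -(a + b) * h2K - 2 * hy3
        rcases hp with ⟨rfl, -⟩ | ⟨rfl, -⟩ | ⟨hx3, hi3⟩
        · have hxy : x ≠ y := by
            intro h
            subst h
            have hb : b = x := by linear_combination hab2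
            rw [hb] at hab
            exact absurd hab (irrefl_of lt x)
          refine Or.inl ⟨hxy, ?_⟩
          have hb : b = 2 * y - x := by linear_combination hab2
          subst hb
          have e : K * (x + (2 * y - x)) = y := by linear_combination y * h2K
          rw [e]
        · have hxy : x ≠ y := by
            intro h
            subst h
            have hb : a = x := by linear_combination hab2
            rw [hb] at hab
            exact absurd hab (irrefl_of lt x)
          refine Or.inl ⟨hxy, ?_⟩
          have hb : a = 2 * y - x := by linear_combination hab2
          subst hb
          have e : K * (2 * y - x + x) = y := by linear_combination y * h2K
          rw [e]
          exact Finset.insert_comm _ _ _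
        · exact absurd hi3 (z2 _)
    · simp only [Finset.mem_insert, Finset.mem_singleton, Prod.mk.injEq] at hp hq
      rcases hq with ⟨-, hl⟩ | ⟨-, hl⟩ | ⟨hy3, hl3⟩
      · rcases hp with ⟨-, rfl⟩ | ⟨-, rfl⟩ | ⟨-, rfl⟩
        · exact absurd hl (z1 _)
        · exact absurd hl (z1 _)
        · exact absurd hl (z3 _)
      · rcases hp with ⟨-, rfl⟩ | ⟨-, rfl⟩ | ⟨-, rfl⟩
        · exact absurd hl (z1 _)
        · exact absurd hl (z1 _)
        · exact absurd hl (z3 _)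
      · have hl : l = i := (add_right_cancel hl3).symm
        subst hl
        have hab2 : a + b = 2 * y := by linear_combination -(a + b) * h2K - 2 * hy3
        rcases hp with ⟨rfl, -⟩ | ⟨hx2, -⟩ | ⟨hx3, hi3⟩
        · have hb : b = 2 * y - x := by linear_combination hab2
          subst hb
          have e1 : (2 * y - x) - 1 = 2 * y - x - 1 := by ring
          have e2 : K * (x + (2 * y - x)) = y := by linear_combination y * h2K
          refine Or.inr (Or.inl ⟨?_, ?_⟩)
          · exact hab'
          · rw [e2]
        · have hb : b = x + 1 := by linear_combination -hx2
          subst hb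
          have ha : a = 2 * y - x - 1 := by linear_combination hab2
          subst ha
          have e1 : x + 1 - 1 = x := by ring
          have e2 : K * (2 * y - x - 1 + (x + 1)) = y := by linear_combination y * h2K
          refine Or.inr (Or.inl ⟨?_, ?_⟩)
          · intro h
            apply hab'
            rw [e1, ← h]
          · rw [e1, e2]
            exact Finset.insert_comm _ _ _
        · exact absurd hi3 (z2 _)
    · simp only [Finset.mem_insert, Finset.mem_singleton, Prod.mk.injEq] at hp hq
      have hx : x = a := by tauto
      have hy : y = a := by tauto
      subst hx
      exact Or.inr (Or.inr ⟨hy.symm, rfl⟩)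
  have crossLowNe : ∀ (x y : ZMod n) (i : ZMod 3), x ≠ y →
      ({(x, i), (2 * y - x, i), (y, i + 1)} : Finset (ZMod n × ZMod 3)) ∈
        𝓑.filter fun B => (x, i) ∈ B ∧ (y, i + 1) ∈ B := by
    intro x y i hxy
    have hxne : x ≠ 2 * y - x := by
      intro h
      exact hxy (hcancel x y (by linear_combination h))
    have e1 : K * (x + (2 * y - x)) = y := by linear_combination y * h2K
    have e2 : K * (2 * y - x + x) = y := by linear_combination y * h2K
    rcases trichotomous_of lt x (2 * y - x) with h | h | h
    · have := zA x (2 * y - x) i h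
      rw [e1] at this
      exact Finset.mem_filter.mpr ⟨this, by simp, by simp⟩
    · exact absurd h hxne
    · have := zA (2 * y - x) x i h
      rw [e2] at this
      have e3 : ({(2 * y - x, i), (x, i), (y, i + 1)} : Finset (ZMod n × ZMod 3)) =
          {(x, i), (2 * y - x, i), (y, i + 1)} := Finset.insert_comm _ _ _
      rw [e3] at this
      exact Finset.mem_filter.mpr ⟨this, by simp, by simp⟩
  have crossLowB : ∀ (x : ZMod n) (i : ZMod 3),
      ({(x, i), (2 * x - x - 1, i), (x, i + 1)} : Finset (ZMod n × ZMod 3)) ∈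
        𝓑.filter fun B => (x, i) ∈ B ∧ (x, i + 1) ∈ B := by
    intro x i
    have hne : x ≠ x - 1 := by
      intro h
      exact h10 (by linear_combination h)
    have := zBm x x i (irrefl_of lt x) hne
    have e1 : K * (x + x) = x := by linear_combination x * h2K
    have e2 : (x - 1 : ZMod n) = 2 * x - x - 1 := by ring
    rw [e1, e2] at this
    exact Finset.mem_filter.mpr ⟨this, by simp, by simp⟩
  have crossLowC : ∀ (x : ZMod n) (i : ZMod 3),
      ({(x, 0), (x, 1), (x, 2)} : Finset (ZMod n × ZMod 3)) ∈
        𝓑.filter fun B => (x, i) ∈ B ∧ (x, i + 1) ∈ B := by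
    intro x i
    refine Finset.mem_filter.mpr ⟨zC x, ?_, ?_⟩
    · rcases zall i with h | h | h <;> rw [h] <;> simp
    · rcases zall (i + 1) with h | h | h <;> rw [h] <;> simp
  have cardPair : ∀ (S : Finset (Finset (ZMod n × ZMod 3))) (A B : Finset (ZMod n × ZMod 3)),
      (∀ C ∈ S, C = A ∨ C = B) → S.card ≤ 2 := by
    intro S A B h
    have hsub : S ⊆ {A, B} := fun C hC => by
      rcases h C hC with rfl | rfl <;> simp
    exact (Finset.card_le_card hsub).trans ((Finset.card_insert_le _ _).trans (by simp))
  have key : ∀ (x y : ZMod n) (i : ZMod 3),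
      1 ≤ (𝓑.filter fun B => (x, i) ∈ B ∧ (y, i + 1) ∈ B).card ∧
      (𝓑.filter fun B => (x, i) ∈ B ∧ (y, i + 1) ∈ B).card ≤ 2 := by
    intro x y i
    by_cases hxy : x = y
    · subst hxy
      constructor
      · exact Finset.card_pos.mpr ⟨_, crossLowB x i⟩
      · refine cardPair _ {(x, i), (2 * x - x - 1, i), (x, i + 1)} {(x, 0), (x, 1), (x, 2)} ?_
        intro C hC
        rcases crossSub x x i C hC with ⟨hc, -⟩ | ⟨-, h⟩ | ⟨-, h⟩
        · exact absurd rfl hc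
        · exact Or.inl h
        · exact Or.inr h
    · constructor
      · exact Finset.card_pos.mpr ⟨_, crossLowNe x y i hxy⟩
      · refine cardPair _ {(x, i), (2 * y - x, i), (y, i + 1)}
          {(x, i), (2 * y - x - 1, i), (y, i + 1)} ?_
        intro C hC
        rcases crossSub x y i C hC with ⟨-, h⟩ | ⟨-, h⟩ | ⟨hc, -⟩
        · exact Or.inl h
        · exact Or.inr h
        · exact absurd hc hxy
  refine ⟨?_, ?_, ?_⟩
  · rintro ⟨x, i⟩ ⟨y, j⟩ hpq
    by_cases hij : i = j
    · subst hij
      have hxy : x ≠ y := fun h => hpq (by rw [h])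
      have h1 := Finset.card_pos.mpr (sameLow x y i hxy)
      have h2 := cardPair _ _ _ (sameSub x y i hxy)
      omega
    · have hc : ∀ u v : ZMod 3, u ≠ v → v = u + 1 ∨ u = v + 1 := by decide
      rcases hc i j hij with h | h
      · subst h
        obtain ⟨h1, h2⟩ := key x y i
        omega
      · subst h
        have e : (𝓑.filter fun B => (x, j + 1) ∈ B ∧ (y, j) ∈ B) =
            𝓑.filter fun B => (y, j) ∈ B ∧ (x, j + 1) ∈ B := by
          apply Finset.filter_congr
          intro B _
          exact and_comm
        rw [e]
        obtain ⟨h1, h2⟩ := key y x j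
        omega
  · -- a pair in exactly one block
    have hK0 : K ≠ 0 := by
      intro h
      rw [h, mul_zero] at h2K
      exact h10 h2K.symm
    have h0K : (0 : ZMod n) ≠ K := fun h => hK0 h.symm
    refine ⟨(0, 0), (K, 0 + 1), ?_, ?_⟩
    · intro h
      exact z2 0 (congrArg Prod.snd h)
    · have hBa := crossLowNe 0 K 0 h0K
      have hsub : ∀ B ∈ 𝓑.filter fun B => ((0 : ZMod n), (0 : ZMod 3)) ∈ B ∧ (K, 0 + 1) ∈ B,
          B = {(0, 0), (2 * K - 0, 0), (K, 0 + 1)} := by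
        intro B hB
        rcases crossSub 0 K 0 B hB with ⟨-, h⟩ | ⟨hc, -⟩ | ⟨hc, -⟩
        · exact h
        · exact absurd (by linear_combination -h2K) hc
        · exact absurd hc h0K
      have heq : (𝓑.filter fun B => ((0 : ZMod n), (0 : ZMod 3)) ∈ B ∧ (K, 0 + 1) ∈ B) =
          {({(0, 0), (2 * K - 0, 0), (K, 0 + 1)} : Finset (ZMod n × ZMod 3))} :=
        Finset.eq_singleton_iff_unique_mem.mpr ⟨hBa, hsub⟩
      rw [heq, Finset.card_singleton]
  · -- a pair in exactly two blocks
    refine ⟨(0, 0), (0, 0 + 1), ?_, ?_⟩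
    · intro h
      exact z2 0 (congrArg Prod.snd h)
    · have h1 := crossLowB (0 : ZMod n) (0 : ZMod 3)
      have h2 := crossLowC (0 : ZMod n) (0 : ZMod 3)
      have hne : ({((0:ZMod n), (0:ZMod 3)), (2 * 0 - 0 - 1, 0), (0, 0 + 1)} : Finset (ZMod n × ZMod 3)) ≠
          {(0, 0), (0, 1), (0, 2)} := by
        intro h
        have hm : ((2 * 0 - 0 - 1 : ZMod n), (0 : ZMod 3)) ∈
            ({((0:ZMod n), (0:ZMod 3)), (0, 1), (0, 2)} : Finset (ZMod n × ZMod 3)) := by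
          rw [← h]; simp
        simp only [Finset.mem_insert, Finset.mem_singleton, Prod.mk.injEq] at hm
        rcases hm with ⟨h', -⟩ | ⟨-, h'⟩ | ⟨-, h'⟩
        · exact h10 (by linear_combination -h')
        · exact absurd h' (by decide)
        · exact absurd h' (by decide)
      have heq : (𝓑.filter fun B => ((0 : ZMod n), (0 : ZMod 3)) ∈ B ∧ ((0 : ZMod n), (0 : ZMod 3) + 1) ∈ B) =
          {({((0:ZMod n), (0:ZMod 3)), (2 * 0 - 0 - 1, 0), (0, 0 + 1)} : Finset (ZMod n × ZMod 3)),
           {(0, 0), (0, 1), (0, 2)}} := by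
        apply Finset.Subset.antisymm
        · intro B hB
          rcases crossSub 0 0 0 B hB with ⟨hc, -⟩ | ⟨-, h⟩ | ⟨-, h⟩
          · exact absurd rfl hc
          · simp [h]
          · simp [h]
        · rw [Finset.insert_subset_iff, Finset.singleton_subset_iff]
          exact ⟨h1, h2⟩
      rw [heq, Finset.card_insert_of_notMem (by simpa using hne), Finset.card_singleton]
end

section
/- Let q be an odd prime power and G = 𝔽_q × 𝔽_q (additive group). Let D̃ = {(a,b) ∈ G : exactly one of a, b is a nonzero square and the other is a nonsquare}. Then D̃ is a partial difference set with parameters (q², (q-1)²/2, (q²-4q+7)/4, (q²-4q+3)/4): |D̃| = (q-1)²/2, and for each nonzero g ∈ G, the number of ordered pairs (x,y) ∈ D̃ × D̃ with x ≠ y and x - y = g equals (q²-4q+7)/4 if g ∈ D̃ and (q²-4q+3)/4 if g ∉ D̃ ∪ {0}. -/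
/-!
Let `χ` be the quadratic character of `F` and `ψ (a, b) = χ a * χ b`. Then `D̃` is exactly the
set where `ψ = -1`, and since `ψ` only takes the values `0, ±1`, its indicator is
`2 • 1_D̃ = ψ ^ 2 - ψ`. For `g ≠ 0` the number of representations `g = x - y` is therefore
`4⁻¹ ∑_y (ψ ^ 2 - ψ)(y) (ψ ^ 2 - ψ)(y + g)`, which splits into products of one-variable
sums `∑_a χ(a) ^ i χ(a + c) ^ j`. These are elementary counts except for `i = j = 1`, where
a substitution turns the sum into the Jacobi sum `J(χ, χ) = -χ(-1)`, giving `-1` for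
`c ≠ 0`. The four products then combine to `q ^ 2 - 4 q + 3 + 4 • 1_D̃(g)`.
-/

open Finset

theorem sum_mulChar_mul_add_eq_jacobiSum {F R : Type*} [Field F] [Fintype F] [CommRing R]
    (μ ν : MulChar F R) {c : F} (hc : c ≠ 0) :
    ∑ a, μ a * ν (a + c) = μ (-c) * ν c * jacobiSum μ ν := by
  rw [jacobiSum, mul_sum, ← Equiv.sum_comp (Equiv.mulLeft₀ (-c) (neg_ne_zero.mpr hc))]
  refine sum_congr rfl fun x _ => ?_
  rw [Equiv.mulLeft₀_apply, show -c * x + c = c * (1 - x) by ring, map_mul, map_mul]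
  ring

theorem card_filter_sub_eq_card_filter_add_mem {G : Type*} [AddCommGroup G] [Fintype G]
    [DecidableEq G] (D : Finset G) {g : G} (hg : g ≠ 0) :
    #{p ∈ D ×ˢ D | p.1 ≠ p.2 ∧ p.1 - p.2 = g} = #{y | y ∈ D ∧ y + g ∈ D} := by
  refine card_nbij' Prod.snd (fun y => (y + g, y)) ?_ ?_ ?_ ?_
  · rintro ⟨x, y⟩ hp
    simp only [coe_filter, mem_product, Set.mem_ofPred_eq, mem_univ, true_and] at hp ⊢
    obtain ⟨⟨hx, hy⟩, -, rfl⟩ := hp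
    exact ⟨hy, by rwa [add_sub_cancel]⟩
  · intro y hy
    simp only [coe_filter, mem_product, Set.mem_ofPred_eq, mem_univ, true_and] at hy ⊢
    exact ⟨⟨hy.2, hy.1⟩, by simpa using hg, add_sub_cancel_left y g⟩
  · rintro ⟨x, y⟩ hp
    simp only [coe_filter, mem_product, Set.mem_ofPred_eq] at hp
    obtain ⟨-, -, rfl⟩ := hp
    simp
  · intro y _
    rfl

section QuadraticChar

variable {F : Type*} [Field F] [Fintype F] [DecidableEq F]

theorem quadraticChar_sq_eq_ite (a : F) :
    quadraticChar F a ^ 2 = 1 - if a = 0 then 1 else 0 := by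
  split_ifs with ha
  · simp [ha]
  · rw [quadraticChar_sq_one ha, sub_zero]

theorem quadraticChar_neg_sq (a : F) : quadraticChar F (-a) ^ 2 = quadraticChar F a ^ 2 := by
  rw [← map_pow, neg_sq, map_pow]

theorem quadraticChar_eq_one_iff {a : F} : quadraticChar F a = 1 ↔ a ≠ 0 ∧ IsSquare a := by
  refine ⟨fun h => ?_, fun ⟨ha, hsq⟩ => (quadraticChar_one_iff_isSquare ha).mpr hsq⟩
  have ha : a ≠ 0 := by rintro rfl; simp at h
  exact ⟨ha, (quadraticChar_one_iff_isSquare ha).mp h⟩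

theorem quadraticChar_mul_eq_neg_one_iff (a b : F) :
    quadraticChar F a * quadraticChar F b = -1 ↔
      (a ≠ 0 ∧ IsSquare a ∧ ¬IsSquare b) ∨ (¬IsSquare a ∧ b ≠ 0 ∧ IsSquare b) := by
  simp only [Int.mul_eq_neg_one_iff_eq_one_or_neg_one, quadraticChar_eq_one_iff,
    quadraticChar_neg_one_iff_not_isSquare, and_assoc]

theorem quadraticChar_sum_sq : ∑ a : F, quadraticChar F a ^ 2 = Fintype.card F - 1 := by
  simp only [quadraticChar_sq_eq_ite, sum_sub_distrib, sum_ite_eq', mem_univ, if_true,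
    sum_const, card_univ, nsmul_eq_mul, mul_one]

theorem quadraticChar_sum_add (hF : ringChar F ≠ 2) (c : F) :
    ∑ a, quadraticChar F (a + c) = 0 :=
  (Equiv.sum_comp (Equiv.addRight c) _).trans (quadraticChar_sum_zero hF)

theorem quadraticChar_sum_sq_mul_add_sq (c : F) :
    ∑ a, quadraticChar F a ^ 2 * quadraticChar F (a + c) ^ 2 =
      Fintype.card F - 1 - quadraticChar F c ^ 2 := by
  have h (a : F) : quadraticChar F a ^ 2 * quadraticChar F (a + c) ^ 2 =
      quadraticChar F a ^ 2 - if a = -c then quadraticChar F (-c) ^ 2 else 0 := by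
    simp only [quadraticChar_sq_eq_ite (a + c), add_eq_zero_iff_eq_neg]
    split_ifs with ha <;> simp [ha]
  simp only [h, sum_sub_distrib, quadraticChar_sum_sq, sum_ite_eq', mem_univ, if_true,
    quadraticChar_neg_sq]

theorem quadraticChar_sum_sq_mul_add (hF : ringChar F ≠ 2) (c : F) :
    ∑ a, quadraticChar F a ^ 2 * quadraticChar F (a + c) = -quadraticChar F c := by
  simp only [quadraticChar_sq_eq_ite, sub_mul, one_mul, ite_mul, zero_mul, sum_sub_distrib,
    quadraticChar_sum_add hF, sum_ite_eq', mem_univ, if_true, zero_add, zero_sub]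

theorem quadraticChar_sum_mul_add_sq (hF : ringChar F ≠ 2) (c : F) :
    ∑ a, quadraticChar F a * quadraticChar F (a + c) ^ 2 = -quadraticChar F (-c) := by
  rw [← Equiv.sum_comp (Equiv.subRight c)]
  simpa [sub_eq_add_neg, mul_comm] using quadraticChar_sum_sq_mul_add hF (-c)

theorem quadraticChar_sum_mul_add (hF : ringChar F ≠ 2) (c : F) :
    ∑ a, quadraticChar F a * quadraticChar F (a + c) =
      Fintype.card F * (1 - quadraticChar F c ^ 2) - 1 := by
  rcases eq_or_ne c 0 with rfl | hc
  · simp only [add_zero, ← sq, quadraticChar_sum_sq, MulChar.map_zero]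
    ring
  have hχ := quadraticChar_isQuadratic F
  rw [sum_mulChar_mul_add_eq_jacobiSum _ _ hc, ← congrArg (jacobiSum _) hχ.inv,
    jacobiSum_nontrivial_inv (quadraticChar_ne_one hF), neg_eq_neg_one_mul c, map_mul,
    quadraticChar_sq_one hc]
  have h₁ : quadraticChar F (-1) ^ 2 = 1 := by rw [quadraticChar_neg_sq, map_one, one_pow]
  linear_combination (-quadraticChar F c ^ 2) * h₁ - quadraticChar_sq_one hc

def quadraticCharProd (p : F × F) : ℤ := quadraticChar F p.1 * quadraticChar F p.2

theorem sum_quadraticCharProd_pow (i : ℕ) :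
    ∑ y : F × F, quadraticCharProd y ^ i = (∑ a, quadraticChar F a ^ i) ^ 2 := by
  simp only [quadraticCharProd, mul_pow, Fintype.sum_prod_type, sq, sum_mul_sum]

theorem sum_quadraticCharProd_pow_mul_pow_add (i j : ℕ) (g : F × F) :
    ∑ y, quadraticCharProd y ^ i * quadraticCharProd (y + g) ^ j =
      (∑ a, quadraticChar F a ^ i * quadraticChar F (a + g.1) ^ j) *
        ∑ b, quadraticChar F b ^ i * quadraticChar F (b + g.2) ^ j := by
  rw [Fintype.sum_prod_type, sum_mul_sum]
  refine sum_congr rfl fun a _ => sum_congr rfl fun b _ => ?_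
  simp only [quadraticCharProd, Prod.fst_add, Prod.snd_add, mul_pow]
  ring

namespace quadraticCharProd

variable {D : Finset (F × F)}

theorem ite_mem_eq (hD : ∀ p, p ∈ D ↔ quadraticCharProd p = -1)
    (p : F × F) :
    (if p ∈ D then 2 else 0 : ℤ) = quadraticCharProd p ^ 2 - quadraticCharProd p := by
  simp only [hD]
  rcases quadraticChar_isQuadratic F p.1 with h₁ | h₁ | h₁ <;>
  rcases quadraticChar_isQuadratic F p.2 with h₂ | h₂ | h₂ <;>
  simp [quadraticCharProd, h₁, h₂]

theorem two_mul_card_eq (hD : ∀ p, p ∈ D ↔ quadraticCharProd p = -1) (hF : ringChar F ≠ 2) :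
    2 * (#D : ℤ) = (Fintype.card F - 1) ^ 2 := by
  have hψ : ∑ p : F × F, quadraticCharProd p = 0 := by
    simpa only [pow_one, quadraticChar_sum_zero hF, zero_pow two_ne_zero] using
      sum_quadraticCharProd_pow (F := F) 1
  calc 2 * (#D : ℤ) = ∑ p, if p ∈ D then 2 else 0 := by
        rw [sum_ite_mem, univ_inter, sum_const, nsmul_eq_mul, mul_comm]
    _ = ∑ p, (quadraticCharProd p ^ 2 - quadraticCharProd p) :=
        sum_congr rfl fun p _ => ite_mem_eq hD p
    _ = (Fintype.card F - 1) ^ 2 := by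
        rw [sum_sub_distrib, sum_quadraticCharProd_pow, hψ, quadraticChar_sum_sq, sub_zero]

theorem four_mul_card_filter_add_mem (hD : ∀ p, p ∈ D ↔ quadraticCharProd p = -1)
    (hF : ringChar F ≠ 2) {g : F × F} (hg : g ≠ 0) :
    4 * (#{y | y ∈ D ∧ y + g ∈ D} : ℤ) =
      Fintype.card F ^ 2 - 4 * Fintype.card F + 3 + if g ∈ D then 4 else 0 := by
  set ψ : F × F → ℤ := quadraticCharProd
  have hsum : 4 * (#{y | y ∈ D ∧ y + g ∈ D} : ℤ) =
      ∑ y, (ψ y ^ 2 - ψ y) * (ψ (y + g) ^ 2 - ψ (y + g)) := by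
    rw [natCast_card_filter, mul_sum]
    refine sum_congr rfl fun y _ => ?_
    rw [← ite_mem_eq hD, ← ite_mem_eq hD]
    split_ifs <;> simp_all
  have hexpand (y : F × F) : (ψ y ^ 2 - ψ y) * (ψ (y + g) ^ 2 - ψ (y + g)) =
      ψ y ^ 2 * ψ (y + g) ^ 2 - ψ y ^ 2 * ψ (y + g) ^ 1 - ψ y ^ 1 * ψ (y + g) ^ 2 +
        ψ y ^ 1 * ψ (y + g) ^ 1 := by ring
  simp only [hexpand, sum_add_distrib, sum_sub_distrib, ψ,
    sum_quadraticCharProd_pow_mul_pow_add] at hsum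
  simp only [pow_one, quadraticChar_sum_sq_mul_add_sq, quadraticChar_sum_sq_mul_add hF,
    quadraticChar_sum_mul_add_sq hF, quadraticChar_sum_mul_add hF] at hsum
  have hg' : (1 - quadraticChar F g.1 ^ 2) * (1 - quadraticChar F g.2 ^ 2) = 0 := by
    simp only [quadraticChar_sq_eq_ite, sub_sub_cancel, mul_ite, mul_one, mul_zero]
    split_ifs with h₁ h₂ <;> first | rfl | exact absurd (Prod.ext h₂ h₁) hg
  have hneg (x : F) : quadraticChar F (-x) = quadraticChar F (-1) * quadraticChar F x := by
    rw [neg_eq_neg_one_mul, map_mul]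
  have h₁ : quadraticChar F (-1) ^ 2 = 1 := by rw [quadraticChar_neg_sq, map_one, one_pow]
  have h₄ : (if g ∈ D then 4 else 0 : ℤ) = 2 * if g ∈ D then 2 else 0 := by
    split_ifs <;> norm_num
  rw [hsum, h₄, ite_mem_eq hD g]
  simp only [quadraticCharProd]
  linear_combination ((Fintype.card F : ℤ) ^ 2 - 1) * hg' - quadraticChar F (-g.2) * hneg g.1
    - quadraticChar F (-1) * quadraticChar F g.1 * hneg g.2
    - quadraticChar F g.1 * quadraticChar F g.2 * h₁

end quadraticCharProd

end QuadraticChar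

/-- Let `q` be an odd prime power, `G = 𝔽_q × 𝔽_q`, and
`D̃ = {(a,b) : exactly one of a, b is a nonzero square and the other a nonsquare}`.
Then `D̃` is a partial difference set with parameters
`(q², (q-1)²/2, (q²-4q+7)/4, (q²-4q+3)/4)`. -/
theorem stmt_19 {F : Type*} [Field F] [Fintype F] [DecidableEq F]
    [DecidablePred (IsSquare : F → Prop)]
    (q : ℕ) (hq : Fintype.card F = q) (hodd : Odd q)
    (D : Finset (F × F))
    (hD : D = Finset.univ.filter fun p : F × F =>
      (p.1 ≠ 0 ∧ IsSquare p.1 ∧ ¬IsSquare p.2) ∨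
      (¬IsSquare p.1 ∧ p.2 ≠ 0 ∧ IsSquare p.2)) :
    2 * D.card = (q - 1) ^ 2 ∧
    ∀ g : F × F, g ≠ 0 →
      (g ∈ D →
        4 * (((D ×ˢ D).filter fun p => p.1 ≠ p.2 ∧ p.1 - p.2 = g).card : ℤ) =
          (q : ℤ) ^ 2 - 4 * q + 7) ∧
      (g ∉ D →
        4 * (((D ×ˢ D).filter fun p => p.1 ≠ p.2 ∧ p.1 - p.2 = g).card : ℤ) =
          (q : ℤ) ^ 2 - 4 * q + 3) := by
  have hF : ringChar F ≠ 2 := by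
    rw [Ne, FiniteField.even_card_iff_char_two, hq, Nat.odd_iff.mp hodd]
    exact one_ne_zero
  have hmem (p : F × F) : p ∈ D ↔ quadraticCharProd p = -1 := by
    rw [hD, mem_filter, quadraticCharProd, quadraticChar_mul_eq_neg_one_iff]
    exact and_iff_right (mem_univ p)
  subst hq
  refine ⟨?_, fun g hg => ?_⟩
  · have := quadraticCharProd.two_mul_card_eq hmem hF
    zify [Fintype.card_pos (α := F)]
    exact this
  · rw [card_filter_sub_eq_card_filter_add_mem D hg,
      quadraticCharProd.four_mul_card_filter_add_mem hmem hF hg]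
    exact ⟨fun h => by rw [if_pos h]; ring, fun h => by rw [if_neg h]; ring⟩
end
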